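/- Let p < 0, α_1, ..., α_N > 0, and let u_1, ..., u_N be unit vectors not concentrated on a closed hemisphere. Suppose (P_i) is a sequence of polytopes, each containing the origin in its interior with all facet outer normals among {u_1,...,u_N}, converging in Hausdorff distance to a polytope P containing the origin in its interior with facet normals among {u_1,...,u_N}. Let ξ(Q) denote the unique minimizer of Φ_Q(ξ) = Σ_k α_k (h(Q,u_k) − ξ·u_k)^p over Int(Q). Then ξ(P_i) → ξ(P) and Φ_{P_i}(ξ(P_i)) → Φ_P(ξ(P)). -/

import Mathlib

open Set Filter

/-- The support function of a set `K` in direction `v`. -/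
noncomputable def spt {n : ℕ} (K : Set (EuclideanSpace ℝ (Fin n)))
    (v : EuclideanSpace ℝ (Fin n)) : ℝ :=
  sSup ((fun x => (inner ℝ x v : ℝ)) '' K)

/-- The objective functional Φ_K. -/
noncomputable def Phi {n N : ℕ} (p : ℝ) (α : Fin N → ℝ)
    (u : Fin N → EuclideanSpace ℝ (Fin n)) (K : Set (EuclideanSpace ℝ (Fin n)))
    (ξ : EuclideanSpace ℝ (Fin n)) : ℝ :=
  ∑ k, α k * (spt K (u k) - (inner ℝ ξ (u k) : ℝ)) ^ p

/-!
The heights `h(P_i, u_k)` converge to `h(Q, u_k)`, since `|h(A, v) - h(B, v)| ≤ d_H(A, B)` for a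
unit vector `v`. The minimizers `ξ_i` eventually lie in a compact neighbourhood of `Q`. At a
cluster point `a` of them, `Φ_{P_i}(ξ_i) ≤ Φ_{P_i}(ξ(Q)) → Φ_Q(ξ(Q))` stays bounded; as
`t ^ p → ∞` when `t → 0⁺`, this keeps `a` off every facet hyperplane of `Q`, so `a ∈ Int Q` and
`Φ_Q(a) ≤ Φ_Q(ξ(Q))` in the limit. Strict convexity of `Φ_Q` (the `u_k` span the space) forces
`a = ξ(Q)`, and continuity of `Φ` in the heights and the point gives the convergence of values.
-/

open Metric Bornology Topology
open scoped RealInnerProductSpace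

section SupportFunction

variable {n : ℕ} {K A B : Set (EuclideanSpace ℝ (Fin n))} {x v : EuclideanSpace ℝ (Fin n)}

lemma bddAbove_inner_image (hK : IsBounded K) (v : EuclideanSpace ℝ (Fin n)) :
    BddAbove ((fun x => ⟪x, v⟫) '' K) := by
  obtain ⟨C, hC⟩ := hK.subset_closedBall 0
  refine ⟨C * ‖v‖, forall_mem_image.2 fun x hx => ?_⟩
  have hxC : ‖x‖ ≤ C := by simpa using hC hx
  exact (real_inner_le_norm x v).trans (mul_le_mul_of_nonneg_right hxC (norm_nonneg v))

lemma inner_le_spt (hK : IsBounded K) (hx : x ∈ K) (v : EuclideanSpace ℝ (Fin n)) :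
    ⟪x, v⟫ ≤ spt K v :=
  le_csSup (bddAbove_inner_image hK v) (mem_image_of_mem _ hx)

lemma spt_le (hK : K.Nonempty) {c : ℝ} (h : ∀ x ∈ K, ⟪x, v⟫ ≤ c) : spt K v ≤ c :=
  csSup_le (hK.image _) (forall_mem_image.2 h)

lemma inner_lt_spt_of_mem_interior (hK : IsBounded K) (hx : x ∈ interior K) (hv : v ≠ 0) :
    ⟪x, v⟫ < spt K v := by
  have hray : Tendsto (fun t : ℝ => x + t • v) (𝓝[>] 0) (𝓝 x) := by
    have : Continuous fun t : ℝ => x + t • v := by fun_prop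
    simpa using (this.tendsto 0).mono_left nhdsWithin_le_nhds
  obtain ⟨t, htK, ht⟩ :=
    ((hray.eventually (mem_interior_iff_mem_nhds.1 hx)).and self_mem_nhdsWithin).exists
  calc ⟪x, v⟫ < ⟪x, v⟫ + t * ‖v‖ ^ 2 :=
        lt_add_of_pos_right _ (mul_pos ht (pow_pos (norm_pos_iff.2 hv) 2))
    _ = ⟪x + t • v, v⟫ := by
        rw [inner_add_left, real_inner_smul_left, real_inner_self_eq_norm_sq]
    _ ≤ spt K v := inner_le_spt hK htK v

lemma spt_le_spt_add_hausdorffDist (hA : A.Nonempty) (hB : B.Nonempty) (hAb : IsBounded A)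
    (hBb : IsBounded B) (hv : ‖v‖ = 1) : spt A v ≤ spt B v + hausdorffDist A B := by
  refine spt_le hA fun x hx => ?_
  have hdist : ⟪x, v⟫ - spt B v ≤ infDist x B := by
    refine (le_infDist hB).2 fun y hy => ?_
    have hxy : ⟪x - y, v⟫ ≤ dist x y := by
      simpa [hv, dist_eq_norm] using real_inner_le_norm (x - y) v
    rw [inner_sub_left] at hxy
    linarith [inner_le_spt hBb hy v]
  linarith [infDist_le_hausdorffDist_of_mem hx
    (hausdorffEDist_ne_top_of_nonempty_of_bounded hA hB hAb hBb)]

lemma abs_spt_sub_spt_le (hA : A.Nonempty) (hB : B.Nonempty) (hAb : IsBounded A)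
    (hBb : IsBounded B) (hv : ‖v‖ = 1) : |spt A v - spt B v| ≤ hausdorffDist A B := by
  rw [abs_sub_le_iff]
  constructor
  · linarith [spt_le_spt_add_hausdorffDist hA hB hAb hBb hv]
  · linarith [spt_le_spt_add_hausdorffDist hB hA hBb hAb hv, hausdorffDist_comm (s := A) (t := B)]

lemma tendsto_spt_of_tendsto_hausdorffDist {ι : Type*} {l : Filter ι}
    {A : ι → Set (EuclideanSpace ℝ (Fin n))} (hA : ∀ i, (A i).Nonempty) (hB : B.Nonempty)
    (hAb : ∀ i, IsBounded (A i)) (hBb : IsBounded B)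
    (h : Tendsto (fun i => hausdorffDist (A i) B) l (𝓝 0)) (hv : ‖v‖ = 1) :
    Tendsto (fun i => spt (A i) v) l (𝓝 (spt B v)) := by
  rw [← tendsto_sub_nhds_zero_iff]
  exact squeeze_zero_norm (fun i => abs_spt_sub_spt_le (hA i) hB (hAb i) hBb hv) h

lemma eventually_mem_thickening_of_tendsto_hausdorffDist {ι : Type*} {l : Filter ι}
    {A : ι → Set (EuclideanSpace ℝ (Fin n))} {x : ι → EuclideanSpace ℝ (Fin n)}
    (hx : ∀ i, x i ∈ A i) (hB : B.Nonempty) (hAb : ∀ i, IsBounded (A i)) (hBb : IsBounded B)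
    (h : Tendsto (fun i => hausdorffDist (A i) B) l (𝓝 0)) {δ : ℝ} (hδ : 0 < δ) :
    ∀ᶠ i in l, x i ∈ thickening δ B := by
  filter_upwards [h.eventually (gt_mem_nhds hδ)] with i hi
  rw [mem_thickening_iff_infDist_lt hB]
  exact (infDist_le_hausdorffDist_of_mem (hx i)
    (hausdorffEDist_ne_top_of_nonempty_of_bounded ⟨x i, hx i⟩ hB (hAb i) hBb)).trans_lt hi

end SupportFunction

lemma mem_interior_of_forall_inner_lt_spt {n N : ℕ} {u : Fin N → EuclideanSpace ℝ (Fin n)}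
    {c : Fin N → ℝ} {K : Set (EuclideanSpace ℝ (Fin n))}
    (hK : K = ⋂ k, {x : EuclideanSpace ℝ (Fin n) | ⟪x, u k⟫ ≤ c k}) (hne : K.Nonempty)
    {x : EuclideanSpace ℝ (Fin n)} (hx : ∀ k, ⟪x, u k⟫ < spt K (u k)) : x ∈ interior K := by
  have hspt : ∀ k, spt K (u k) ≤ c k := fun k =>
    spt_le hne fun y hy => by rw [hK, mem_iInter] at hy; exact hy k
  rw [mem_interior_iff_mem_nhds, hK, iInter_mem]
  intro k
  have hcont : Continuous fun y : EuclideanSpace ℝ (Fin n) => ⟪y, u k⟫ := by fun_prop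
  exact (hcont.continuousAt.eventually (gt_mem_nhds ((hx k).trans_le (hspt k)))).mono
    fun _ => le_of_lt

lemma strictConvexOn_rpow_of_neg {p : ℝ} (hp : p < 0) :
    StrictConvexOn ℝ (Ioi 0) fun x : ℝ => x ^ p := by
  refine strictConvexOn_of_deriv2_pos (convex_Ioi 0)
    (fun x hx => (Real.continuousAt_rpow_const x p (Or.inl hx.ne')).continuousWithinAt)
    fun x hx => ?_
  rw [interior_Ioi] at hx
  have hderiv : deriv (fun y : ℝ => y ^ p) =ᶠ[𝓝 x] fun y => p * y ^ (p - 1) := by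
    filter_upwards [Ioi_mem_nhds hx] with y hy
    exact (Real.hasDerivAt_rpow_const (Or.inl hy.ne')).deriv
  have hderiv2 : deriv^[2] (fun y : ℝ => y ^ p) x = p * ((p - 1) * x ^ (p - 1 - 1)) := by
    rw [Function.iterate_succ_apply, Function.iterate_one, hderiv.deriv_eq]
    exact ((Real.hasDerivAt_rpow_const (Or.inl hx.ne')).const_mul p).deriv
  rw [hderiv2, ← mul_assoc]
  exact mul_pos (mul_pos_of_neg_of_neg hp (by linarith)) (Real.rpow_pos_of_pos hx _)

section Phi

variable {n N : ℕ} {p : ℝ} {α : Fin N → ℝ} {u : Fin N → EuclideanSpace ℝ (Fin n)}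

lemma strictConvexOn_Phi (hp : p < 0) (hα : ∀ k, 0 < α k)
    (hspan : ∀ x : EuclideanSpace ℝ (Fin n), x ≠ 0 → ∃ k, ⟪x, u k⟫ ≠ 0)
    {K s : Set (EuclideanSpace ℝ (Fin n))} (hs : Convex ℝ s)
    (hpos : ∀ ξ ∈ s, ∀ k, ⟪ξ, u k⟫ < spt K (u k)) : StrictConvexOn ℝ s (Phi p α u K) := by
  refine ⟨hs, fun x hx y hy hxy a b ha hb hab => ?_⟩
  obtain ⟨k₀, hk₀⟩ := hspan (x - y) (sub_ne_zero.2 hxy)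
  set r : EuclideanSpace ℝ (Fin n) → Fin N → ℝ := fun ξ k => spt K (u k) - ⟪ξ, u k⟫
  have hr : ∀ k, r (a • x + b • y) k = a • r x k + b • r y k := fun k => by
    simp only [r, inner_add_left, real_inner_smul_left, smul_eq_mul]
    linear_combination (-spt K (u k)) * hab
  have hrx : ∀ k, r x k ∈ Ioi 0 := fun k => sub_pos.2 (hpos x hx k)
  have hry : ∀ k, r y k ∈ Ioi 0 := fun k => sub_pos.2 (hpos y hy k)
  have hne : r x k₀ ≠ r y k₀ := fun h => hk₀ (by rw [inner_sub_left]; linarith)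
  simp only [Phi, smul_eq_mul, Finset.mul_sum, ← Finset.sum_add_distrib]
  refine Finset.sum_lt_sum (fun k _ => ?_) ⟨k₀, Finset.mem_univ _, ?_⟩
  · have := (strictConvexOn_rpow_of_neg hp).convexOn.2 (hrx k) (hry k) ha.le hb.le hab
    rw [← hr] at this
    simp only [smul_eq_mul] at this
    nlinarith [hα k]
  · have := (strictConvexOn_rpow_of_neg hp).2 (hrx k₀) (hry k₀) hne ha hb hab
    rw [← hr] at this
    simp only [smul_eq_mul] at this
    nlinarith [hα k₀]

lemma tendsto_Phi {ι : Type*} {l : Filter ι} {K : ι → Set (EuclideanSpace ℝ (Fin n))}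
    {K₀ : Set (EuclideanSpace ℝ (Fin n))} {ξ : ι → EuclideanSpace ℝ (Fin n)}
    {ξ₀ : EuclideanSpace ℝ (Fin n)}
    (hK : ∀ k, Tendsto (fun i => spt (K i) (u k)) l (𝓝 (spt K₀ (u k))))
    (hξ : Tendsto ξ l (𝓝 ξ₀)) (hξ₀ : ∀ k, ⟪ξ₀, u k⟫ < spt K₀ (u k)) :
    Tendsto (fun i => Phi p α u (K i) (ξ i)) l (𝓝 (Phi p α u K₀ ξ₀)) :=
  tendsto_finsetSum _ fun k _ =>
    (((hK k).sub (hξ.inner tendsto_const_nhds)).rpow_const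
      (Or.inl (sub_pos.2 (hξ₀ k)).ne')).const_mul _

lemma mul_rpow_le_Phi (hα : ∀ k, 0 ≤ α k) {K : Set (EuclideanSpace ℝ (Fin n))}
    {ξ : EuclideanSpace ℝ (Fin n)} (hξ : ∀ k, ⟪ξ, u k⟫ < spt K (u k)) (k : Fin N) :
    α k * (spt K (u k) - ⟪ξ, u k⟫) ^ p ≤ Phi p α u K ξ :=
  Finset.single_le_sum (f := fun k => α k * (spt K (u k) - ⟪ξ, u k⟫) ^ p)
    (fun j _ => mul_nonneg (hα j) (Real.rpow_nonneg (sub_pos.2 (hξ j)).le p))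
    (Finset.mem_univ k)

lemma forall_inner_lt_spt_of_isBoundedUnder {ι : Type*} {l : Filter ι} [l.NeBot] (hp : p < 0)
    (hα : ∀ k, 0 < α k) {K : ι → Set (EuclideanSpace ℝ (Fin n))}
    {K₀ : Set (EuclideanSpace ℝ (Fin n))} {ξ : ι → EuclideanSpace ℝ (Fin n)}
    {ξ₀ : EuclideanSpace ℝ (Fin n)}
    (hK : ∀ k, Tendsto (fun i => spt (K i) (u k)) l (𝓝 (spt K₀ (u k))))
    (hξ : Tendsto ξ l (𝓝 ξ₀)) (hpos : ∀ i k, ⟪ξ i, u k⟫ < spt (K i) (u k))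
    (hbdd : IsBoundedUnder (· ≤ ·) l fun i => Phi p α u (K i) (ξ i)) :
    ∀ k, ⟪ξ₀, u k⟫ < spt K₀ (u k) := by
  intro k
  by_contra! hle
  set t : ι → ℝ := fun i => spt (K i) (u k) - ⟪ξ i, u k⟫
  have ht : Tendsto t l (𝓝 (spt K₀ (u k) - ⟪ξ₀, u k⟫)) := (hK k).sub (hξ.inner tendsto_const_nhds)
  have hlim : spt K₀ (u k) - ⟪ξ₀, u k⟫ = 0 :=
    le_antisymm (by linarith) (ge_of_tendsto' ht fun i => (sub_pos.2 (hpos i k)).le)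
  rw [hlim] at ht
  have hblow : Tendsto (fun i => α k * t i ^ p) l atTop :=
    ((tendsto_rpow_neg_nhdsGT_zero hp).comp (tendsto_nhdsWithin_iff.2
      ⟨ht, Eventually.of_forall fun i => sub_pos.2 (hpos i k)⟩)).const_mul_atTop (hα k)
  exact not_isBoundedUnder_of_tendsto_atTop
    (tendsto_atTop_mono (fun i => mul_rpow_le_Phi (fun j => (hα j).le) (hpos i) k) hblow) hbdd

lemma forall_inner_lt_spt_and_Phi_le_of_tendsto {ι : Type*} {l : Filter ι} [l.NeBot]
    (hp : p < 0) (hα : ∀ k, 0 < α k) {K : ι → Set (EuclideanSpace ℝ (Fin n))}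
    {K₀ : Set (EuclideanSpace ℝ (Fin n))} {ξ : ι → EuclideanSpace ℝ (Fin n)}
    {a ξ₀ : EuclideanSpace ℝ (Fin n)}
    (hK : ∀ k, Tendsto (fun i => spt (K i) (u k)) l (𝓝 (spt K₀ (u k))))
    (hξ : Tendsto ξ l (𝓝 a)) (hpos : ∀ i k, ⟪ξ i, u k⟫ < spt (K i) (u k))
    (hξ₀ : ∀ k, ⟪ξ₀, u k⟫ < spt K₀ (u k))
    (hle : ∀ᶠ i in l, Phi p α u (K i) (ξ i) ≤ Phi p α u (K i) ξ₀) :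
    (∀ k, ⟪a, u k⟫ < spt K₀ (u k)) ∧ Phi p α u K₀ a ≤ Phi p α u K₀ ξ₀ := by
  have hΦξ₀ := tendsto_Phi (α := α) (p := p) hK tendsto_const_nhds hξ₀
  have ha := forall_inner_lt_spt_of_isBoundedUnder hp hα hK hξ hpos
    (hΦξ₀.isBoundedUnder_le.mono_le hle)
  exact ⟨ha, le_of_tendsto_of_tendsto (tendsto_Phi hK hξ ha) hΦξ₀ hle⟩

end Phi

/-- Continuity of the minimizing point and minimal value under Hausdorff
convergence of polytopes. -/
theorem stmt12 (n N : ℕ) (p : ℝ) (hp : p < 0) (α : Fin N → ℝ) (hα : ∀ k, 0 < α k)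
    (u : Fin N → EuclideanSpace ℝ (Fin n)) (hu : ∀ k, ‖u k‖ = 1)
    (hhemi : ∀ x : EuclideanSpace ℝ (Fin n), x ≠ 0 → ∃ k, 0 < (inner ℝ x (u k) : ℝ))
    (P : ℕ → Set (EuclideanSpace ℝ (Fin n))) (b : ℕ → Fin N → ℝ)
    (hPdef : ∀ i, P i = ⋂ k, {x : EuclideanSpace ℝ (Fin n) | (inner ℝ x (u k) : ℝ) ≤ b i k})
    (hPbd : ∀ i, Bornology.IsBounded (P i))
    (hP0 : ∀ i, (0 : EuclideanSpace ℝ (Fin n)) ∈ interior (P i))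
    (Q : Set (EuclideanSpace ℝ (Fin n))) (bQ : Fin N → ℝ)
    (hQdef : Q = ⋂ k, {x : EuclideanSpace ℝ (Fin n) | (inner ℝ x (u k) : ℝ) ≤ bQ k})
    (hQbd : Bornology.IsBounded Q)
    (hQ0 : (0 : EuclideanSpace ℝ (Fin n)) ∈ interior Q)
    (hconv : Tendsto (fun i => Metric.hausdorffDist (P i) Q) atTop (nhds 0))
    (ξ : ℕ → EuclideanSpace ℝ (Fin n))
    (hξ : ∀ i, ξ i ∈ interior (P i) ∧
      IsMinOn (Phi p α u (P i)) (interior (P i)) (ξ i))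
    (ξQ : EuclideanSpace ℝ (Fin n))
    (hξQ : ξQ ∈ interior Q ∧ IsMinOn (Phi p α u Q) (interior Q) ξQ) :
    Tendsto ξ atTop (nhds ξQ) ∧
      Tendsto (fun i => Phi p α u (P i) (ξ i)) atTop (nhds (Phi p α u Q ξQ)) := by
  have hPne : ∀ i, (P i).Nonempty := fun i => ⟨0, interior_subset (hP0 i)⟩
  have hQne : Q.Nonempty := ⟨0, interior_subset hQ0⟩
  have hu₀ : ∀ k, u k ≠ 0 := fun k => norm_ne_zero_iff.1 (by simp [hu k])
  have hh : ∀ k, Tendsto (fun i => spt (P i) (u k)) atTop (𝓝 (spt Q (u k))) := fun k =>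
    tendsto_spt_of_tendsto_hausdorffDist hPne hQne hPbd hQbd hconv (hu k)
  have hξpos : ∀ i k, ⟪ξ i, u k⟫ < spt (P i) (u k) := fun i k =>
    inner_lt_spt_of_mem_interior (hPbd i) (hξ i).1 (hu₀ k)
  have hξQpos : ∀ k, ⟪ξQ, u k⟫ < spt Q (u k) := fun k =>
    inner_lt_spt_of_mem_interior hQbd hξQ.1 (hu₀ k)
  have hle : ∀ᶠ i in atTop, Phi p α u (P i) (ξ i) ≤ Phi p α u (P i) ξQ := by
    filter_upwards [eventually_all.2 fun k => (hh k).eventually (lt_mem_nhds (hξQpos k))]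
      with i hi using (hξ i).2 (mem_interior_of_forall_inner_lt_spt (hPdef i) (hPne i) hi)
  have hQconv : Convex ℝ Q :=
    hQdef ▸ convex_iInter fun k => convex_halfSpace_le (innerₛₗ ℝ |>.flip (u k)).isLinear _
  have hstrict : StrictConvexOn ℝ (interior Q) (Phi p α u Q) :=
    strictConvexOn_Phi hp hα (fun x hx => (hhemi x hx).imp fun _ => ne_of_gt) hQconv.interior
      fun x hx k => inner_lt_spt_of_mem_interior hQbd hx (hu₀ k)
  have hmem : ∀ᶠ i in atTop, ξ i ∈ cthickening 1 Q :=
    (eventually_mem_thickening_of_tendsto_hausdorffDist (fun i => interior_subset (hξ i).1)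
      hQne hPbd hQbd hconv one_pos).mono fun _ => (thickening_subset_cthickening 1 Q ·)
  have hlim : Tendsto ξ atTop (𝓝 ξQ) := by
    refine (isCompact_of_isClosed_isBounded isClosed_cthickening hQbd.cthickening)
      |>.tendsto_nhds_of_unique_mapClusterPt hmem fun a _ ha => ?_
    have : (atTop ⊓ comap ξ (𝓝 a)).NeBot := by
      rw [← map_neBot_iff ξ, Filter.push_pull, inf_comm]
      exact ha
    obtain ⟨hapos, hale⟩ := forall_inner_lt_spt_and_Phi_le_of_tendsto (a := a) hp hα
      (fun k => (hh k).mono_left inf_le_left) (tendsto_comap.mono_left inf_le_right) hξpos hξQpos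
      (hle.filter_mono inf_le_left)
    exact hstrict.eq_of_isMinOn (isMinOn_iff.2 fun z hz => hale.trans (hξQ.2 hz)) hξQ.2
      (mem_interior_of_forall_inner_lt_spt hQdef hQne hapos) hξQ.1
  exact ⟨hlim, tendsto_Phi hh hlim hξQpos⟩
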